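/- If G is a group acting effectively on the projective line P^1 over the complex numbers (i.e., G embeds into PGL(2,C)), then G does not contain a subgroup isomorphic to (Z/2)^3. -/
import Mathlib

open Matrix

/-- The projective general linear group `PGL(n, R) = GL(n, R)/Z(GL(n, R))`,
the automorphism group of `ℙⁿ⁻¹`. -/
abbrev ProjectiveGeneralLinearGroup (n : Type*) [DecidableEq n] [Fintype n]
    (R : Type*) [CommRing R] : Type _ :=
  GeneralLinearGroup n R ⧸ Subgroup.center (GeneralLinearGroup n R)

namespace Klein8Aux

abbrev M2 := Matrix (Fin 2) (Fin 2) ℂ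
abbrev Γ2 := GL (Fin 2) ℂ
abbrev PGL2 := ProjectiveGeneralLinearGroup (Fin 2) ℂ

lemma cent_lemma (A B : M2) (hns : ¬ ∃ μ : ℂ, A = μ • (1 : M2)) (h : A * B = B * A) :
    ∃ α β : ℂ, B = α • (1 : M2) + β • A := by
  have h00 := congrFun (congrFun h 0) 0
  have h01 := congrFun (congrFun h 0) 1
  have h10 := congrFun (congrFun h 1) 0
  have h11 := congrFun (congrFun h 1) 1
  simp [Matrix.mul_apply, Fin.sum_univ_two] at h00 h01 h10 h11
  have key : ∀ α β : ℂ,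
      α + β * A 0 0 = B 0 0 → β * A 0 1 = B 0 1 → β * A 1 0 = B 1 0 →
      α + β * A 1 1 = B 1 1 → ∃ α β : ℂ, B = α • (1 : M2) + β • A := by
    intro α β e1 e2 e3 e4
    refine ⟨α, β, ?_⟩
    ext i j
    revert i j
    simp only [← Matrix.ext_iff, Fin.forall_fin_two, Matrix.add_apply,
      Matrix.smul_apply, smul_eq_mul]
    refine ⟨⟨?_, ?_⟩, ?_, ?_⟩ <;> simp [Matrix.one_apply] <;>
      [exact e1.symm; exact e2.symm; exact e3.symm; exact e4.symm]
  by_cases hb : A 0 1 ≠ 0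
  · refine key (B 0 0 - (B 0 1 / A 0 1) * A 0 0) (B 0 1 / A 0 1) (by ring) ?_ ?_ ?_
    · field_simp
    · field_simp
      linear_combination -h00
    · field_simp
      linear_combination -h01
  · push_neg at hb
    by_cases hc : A 1 0 ≠ 0
    · refine key (B 1 1 - (B 1 0 / A 1 0) * A 1 1) (B 1 0 / A 1 0) ?_ ?_ ?_ (by ring)
      · field_simp
        linear_combination -h10
      · field_simp
        linear_combination -h11
      · field_simp
    · push_neg at hc
      have had : A 0 0 ≠ A 1 1 := by
        intro he
        refine hns ⟨A 1 1, ?_⟩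
        ext i j
        revert i j
        simp only [← Matrix.ext_iff, Fin.forall_fin_two, Matrix.smul_apply, smul_eq_mul]
        refine ⟨⟨?_, ?_⟩, ?_, ?_⟩ <;> simp [Matrix.one_apply, hb, hc, he]
      have hsub : A 1 1 - A 0 0 ≠ 0 := sub_ne_zero.mpr (Ne.symm had)
      have hB01 : B 0 1 = 0 := by
        have : B 0 1 * (A 0 0 - A 1 1) = 0 := by
          linear_combination h01 - B 1 1 * hb + B 0 0 * hb
        rcases mul_eq_zero.mp this with h' | h'
        · exact h'
        · exact absurd (sub_eq_zero.mp h') had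
      have hB10 : B 1 0 = 0 := by
        have : B 1 0 * (A 1 1 - A 0 0) = 0 := by
          linear_combination h10 + B 1 1 * hc - B 0 0 * hc
        rcases mul_eq_zero.mp this with h' | h'
        · exact h'
        · exact absurd (sub_eq_zero.mp h').symm had
      refine key (B 0 0 - ((B 1 1 - B 0 0) / (A 1 1 - A 0 0)) * A 0 0)
        ((B 1 1 - B 0 0) / (A 1 1 - A 0 0)) (by ring) ?_ ?_ ?_
      · rw [hb, hB01, mul_zero]
      · rw [hc, hB10, mul_zero]
      · field_simp
        ring

lemma scalar_central (μ : ℂ) (u : Γ2) (h : (u : M2) = μ • (1 : M2)) :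
    u ∈ Subgroup.center Γ2 := by
  rw [Subgroup.mem_center_iff]
  intro g
  ext : 1
  show (g : M2) * u = (u : M2) * g
  rw [h, smul_mul_assoc, mul_smul_comm, one_mul, mul_one]

lemma central_scalar (u : Γ2) (h : u ∈ Subgroup.center Γ2) :
    ∃ μ : ℂ, (u : M2) = μ • (1 : M2) := by
  have hdet1 : (!![1,1;0,1] : M2) * !![1,-1;0,1] = 1 := by
    norm_num [Matrix.mul_fin_two]; exact Matrix.one_fin_two.symm
  have hdet1' : (!![1,-1;0,1] : M2) * !![1,1;0,1] = 1 := by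
    norm_num [Matrix.mul_fin_two]; exact Matrix.one_fin_two.symm
  have hdet2 : (!![1,0;1,1] : M2) * !![1,0;-1,1] = 1 := by
    norm_num [Matrix.mul_fin_two]; exact Matrix.one_fin_two.symm
  have hdet2' : (!![1,0;-1,1] : M2) * !![1,0;1,1] = 1 := by
    norm_num [Matrix.mul_fin_two]; exact Matrix.one_fin_two.symm
  set T1 : Γ2 := ⟨!![1,1;0,1], !![1,-1;0,1], hdet1, hdet1'⟩ with hT1
  set T2 : Γ2 := ⟨!![1,0;1,1], !![1,0;-1,1], hdet2, hdet2'⟩ with hT2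
  have e1 : (T1 : M2) * u = (u : M2) * T1 :=
    congrArg Units.val (Subgroup.mem_center_iff.mp h T1)
  have e2 : (T2 : M2) * u = (u : M2) * T2 :=
    congrArg Units.val (Subgroup.mem_center_iff.mp h T2)
  have e1' := congrFun (congrFun e1 1) 1
  have e1'' := congrFun (congrFun e1 0) 1
  have e2' := congrFun (congrFun e2 0) 0
  simp [hT1, hT2, Matrix.mul_apply, Fin.sum_univ_two] at e1' e1'' e2'
  refine ⟨(u : M2) 0 0, ?_⟩
  ext i j
  revert i j
  simp only [← Matrix.ext_iff, Fin.forall_fin_two, Matrix.smul_apply, smul_eq_mul]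
  refine ⟨⟨?_, ?_⟩, ?_, ?_⟩ <;> simp [Matrix.one_apply]
  · linear_combination e2'
  · linear_combination e1'
  · first
      | linear_combination e1'' | linear_combination -e1''
      | linear_combination e1'' - e1' | linear_combination e1'' + e1'
      | linear_combination -e1'' - e1' | linear_combination -e1'' + e1'

lemma mk_eq_of_smul (A B : Γ2) (β : ℂ) (h : (B : M2) = β • (A : M2)) :
    (QuotientGroup.mk A : PGL2) = QuotientGroup.mk B := by
  rw [QuotientGroup.eq]
  refine scalar_central β _ ?_
  show ((A⁻¹ : Γ2) : M2) * (B : M2) = β • 1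
  rw [h, mul_smul_comm]
  congr 1
  exact Units.inv_mul A

lemma nonscalar_of_ne_one (A : Γ2) (h : (QuotientGroup.mk A : PGL2) ≠ 1) :
    ¬ ∃ μ : ℂ, (A : M2) = μ • (1 : M2) := by
  rintro ⟨μ, hμ⟩
  exact h ((QuotientGroup.eq_one_iff A).mpr (scalar_central μ A hμ))

lemma sq_scalar (A : Γ2) (h : (QuotientGroup.mk A : PGL2) * QuotientGroup.mk A = 1) :
    ∃ l : ℂ, l ≠ 0 ∧ (A : M2) * (A : M2) = l • (1 : M2) := by
  have : (QuotientGroup.mk (A * A) : PGL2) = 1 := by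
    rw [QuotientGroup.mk_mul]; exact h
  obtain ⟨l, hl⟩ := central_scalar _ ((QuotientGroup.eq_one_iff (A * A)).mp this)
  refine ⟨l, ?_, by rw [← Units.val_mul]; exact hl⟩
  intro h0
  rw [h0, zero_smul] at hl
  have := Units.ne_zero (A * A)
  exact this hl

lemma comm_rel (A B : Γ2)
    (h : (QuotientGroup.mk A : PGL2) * QuotientGroup.mk B
       = QuotientGroup.mk B * QuotientGroup.mk A) :
    ∃ z : ℂ, (B : M2) * (A : M2) = z • ((A : M2) * (B : M2)) := by
  have h' : (QuotientGroup.mk (A * B) : PGL2) = QuotientGroup.mk (B * A) := by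
    rw [QuotientGroup.mk_mul, QuotientGroup.mk_mul]; exact h
  obtain ⟨z, hz⟩ := central_scalar _ (QuotientGroup.eq.mp h')
  refine ⟨z, ?_⟩
  have key : (A * B) * ((A * B)⁻¹ * (B * A)) = B * A := by group
  have hthis := congrArg (Units.val) key
  rw [Units.val_mul, hz] at hthis
  calc (B : M2) * (A : M2) = ((B * A : Γ2) : M2) := (Units.val_mul B A).symm
  _ = ((A * B : Γ2) : M2) * (z • 1) := hthis.symm
  _ = ((A : M2) * (B : M2)) * (z • 1) := by rw [Units.val_mul]
  _ = z • ((A : M2) * (B : M2)) := by rw [mul_smul_comm, mul_one]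

lemma sign_lemma (A B : Γ2) (lA : ℂ) (hA2 : (A : M2) * A = lA • 1) (hlA : lA ≠ 0)
    (z : ℂ) (hz : (B : M2) * A = z • ((A : M2) * B)) : z = 1 ∨ z = -1 := by
  have h1 : (B : M2) * ((A : M2) * A) = (z * z) • (((A : M2) * A) * B) := by
    calc (B : M2) * ((A : M2) * A) = ((B : M2) * A) * A := by rw [mul_assoc]
    _ = (z • ((A : M2) * B)) * A := by rw [hz]
    _ = z • ((A : M2) * ((B : M2) * A)) := by rw [smul_mul_assoc, mul_assoc]
    _ = z • ((A : M2) * (z • ((A : M2) * B))) := by rw [hz]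
    _ = (z * z) • (((A : M2) * A) * B) := by
        rw [mul_smul_comm, smul_smul, mul_assoc]
  rw [hA2, mul_smul_comm, mul_one, smul_mul_assoc, one_mul, smul_smul] at h1
  have h2 : (lA - z * z * lA) • (B : M2) = 0 := by
    rw [sub_smul, h1, sub_self]
  rcases smul_eq_zero.mp h2 with h3 | h3
  · have hzz : z * z = 1 := by
      apply mul_right_cancel₀ hlA
      linear_combination -h3
    exact mul_self_eq_one_iff.mp hzz
  · exact absurd h3 (Units.ne_zero B)

lemma prop_of_comm (A B : Γ2)
    (hAns : ¬ ∃ μ : ℂ, (A : M2) = μ • (1 : M2))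
    (hBns : ¬ ∃ μ : ℂ, (B : M2) = μ • (1 : M2))
    (lA lB : ℂ) (hA2 : (A : M2) * A = lA • 1) (hB2 : (B : M2) * B = lB • 1)
    (hcomm : (A : M2) * B = (B : M2) * A) :
    ∃ β : ℂ, (B : M2) = β • (A : M2) := by
  obtain ⟨α, β, hab⟩ := cent_lemma (A : M2) (B : M2) hAns hcomm
  by_cases hα : α = 0
  · exact ⟨β, by rw [hab, hα, zero_smul, zero_add]⟩
  by_cases hβ : β = 0
  · exact absurd ⟨α, by rw [hab, hβ, zero_smul, add_zero]⟩ hBns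
  exfalso
  have expand : (B : M2) * B
      = (α * α) • (1 : M2) + (2 * α * β) • (A : M2) + (β * β) • ((A : M2) * A) := by
    rw [hab]
    trans ((α * α) • (1 : M2) + (α * β) • (A : M2)
      + ((α * β) • (A : M2) + (β * β) • ((A : M2) * A)))
    · simp only [add_mul, mul_add, smul_mul_assoc, mul_smul_comm, one_mul, mul_one,
        smul_add, smul_smul, mul_comm β α]
    · rw [show (2 * α * β) • (A : M2) = (α * β) • (A : M2) + (α * β) • (A : M2) by
        rw [← add_smul]; congr 1; ring]
      abel
  have e : (α * α) • (1 : M2) + (2 * α * β) • (A : M2) + (β * β * lA) • (1 : M2)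
      = lB • (1 : M2) := by
    have hAA : (β * β) • ((A : M2) * A) = (β * β * lA) • (1 : M2) := by
      rw [hA2, smul_smul]
    rw [← hAA, ← expand]
    exact hB2
  have e2 : (2 * α * β) • (A : M2) = (lB - α * α - β * β * lA) • (1 : M2) := by
    rw [sub_smul, sub_smul, ← e]
    abel
  have h2ab : (2 : ℂ) * α * β ≠ 0 := by
    simp [hα, hβ]
  refine hAns ⟨(2 * α * β)⁻¹ * (lB - α * α - β * β * lA), ?_⟩
  have hfinal := congrArg (fun m : M2 => ((2 * α * β)⁻¹ : ℂ) • m) e2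
  simp only [smul_smul, inv_mul_cancel₀ h2ab, one_smul] at hfinal
  exact hfinal

lemma anti_of_ne (A B : Γ2)
    (hBns : ¬ ∃ μ : ℂ, (B : M2) = μ • (1 : M2))
    (hAns : ¬ ∃ μ : ℂ, (A : M2) = μ • (1 : M2))
    (lA lB : ℂ) (hlA : lA ≠ 0)
    (hA2 : (A : M2) * A = lA • 1) (hB2 : (B : M2) * B = lB • 1)
    (hcomm : (QuotientGroup.mk A : PGL2) * QuotientGroup.mk B
       = QuotientGroup.mk B * QuotientGroup.mk A)
    (hne : (QuotientGroup.mk A : PGL2) ≠ QuotientGroup.mk B) :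
    (B : M2) * A = -((A : M2) * B) := by
  obtain ⟨z, hz⟩ := comm_rel A B hcomm
  rcases sign_lemma A B lA hA2 hlA z hz with h1 | h1
  · exfalso
    rw [h1, one_smul] at hz
    obtain ⟨β, hβ⟩ := prop_of_comm A B hAns hBns lA lB hA2 hB2 hz.symm
    exact hne (mk_eq_of_smul A B β hβ)
  · rw [h1, neg_smul, one_smul] at hz
    exact hz

lemma pgl2_main (p q r : PGL2)
    (hp2 : p * p = 1) (hq2 : q * q = 1) (hr2 : r * r = 1)
    (hp1 : p ≠ 1) (hq1 : q ≠ 1) (hr1 : r ≠ 1)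
    (hpq : p ≠ q) (hrp : r ≠ p) (hrq : r ≠ q) (hrpq : r ≠ p * q)
    (cpq : p * q = q * p) (crp : r * p = p * r) (crq : r * q = q * r) : False := by
  obtain ⟨A, hA⟩ := QuotientGroup.mk_surjective p
  obtain ⟨B, hB⟩ := QuotientGroup.mk_surjective q
  obtain ⟨C, hC⟩ := QuotientGroup.mk_surjective r
  subst hA hB hC
  obtain ⟨lA, hlA, hA2⟩ := sq_scalar A hp2
  obtain ⟨lB, hlB, hB2⟩ := sq_scalar B hq2
  obtain ⟨lC, hlC, hC2⟩ := sq_scalar C hr2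
  have hAns := nonscalar_of_ne_one A hp1
  have hBns := nonscalar_of_ne_one B hq1
  have hCns := nonscalar_of_ne_one C hr1
  have hBA : (B : M2) * A = -((A : M2) * B) :=
    anti_of_ne A B hBns hAns lA lB hlA hA2 hB2 cpq hpq
  have hCA : (C : M2) * A = -((A : M2) * C) :=
    anti_of_ne A C hCns hAns lA lC hlA hA2 hC2 crp.symm (fun h => hrp h.symm)
  have hCB : (C : M2) * B = -((B : M2) * C) :=
    anti_of_ne B C hCns hBns lB lC hlB hB2 hC2 crq.symm (fun h => hrq h.symm)
  -- D = A * B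
  set X := (A : M2)
  set Y := (B : M2)
  set Z := (C : M2)
  have hAinv : ((A⁻¹ : Γ2) : M2) = lA⁻¹ • X := by
    have : X * (lA⁻¹ • X) = 1 := by
      rw [mul_smul_comm, hA2, smul_smul, inv_mul_cancel₀ hlA, one_smul]
    exact Units.inv_eq_of_mul_eq_one_right this
  have hDns : ¬ ∃ μ : ℂ, ((A * B : Γ2) : M2) = μ • (1 : M2) := by
    rintro ⟨μ, hμ⟩
    rw [Units.val_mul] at hμ
    have hY : Y = (μ * lA⁻¹) • X := by
      have h1 : Y = ((A⁻¹ : Γ2) : M2) * (X * Y) := by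
        rw [← mul_assoc]
        rw [show ((A⁻¹ : Γ2) : M2) * X = 1 from Units.inv_mul A, one_mul]
      rw [h1, hμ, hAinv, smul_mul_assoc, mul_smul_comm, mul_one, smul_smul,
        mul_comm lA⁻¹ μ]
    exact hpq (mk_eq_of_smul A B (μ * lA⁻¹) hY)
  have hD2 : ((A * B : Γ2) : M2) * ((A * B : Γ2) : M2) = (-(lA * lB)) • (1 : M2) := by
    rw [Units.val_mul]
    calc X * Y * (X * Y) = X * ((Y * X) * Y) := by simp only [mul_assoc]
    _ = X * ((-(X * Y)) * Y) := by rw [hBA]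
    _ = -((X * X) * (Y * Y)) := by simp only [neg_mul, mul_neg, mul_assoc]
    _ = (-(lA * lB)) • (1 : M2) := by
        rw [hA2, hB2, smul_mul_assoc, one_mul, smul_smul, ← neg_smul]
  have hDC : ((A * B : Γ2) : M2) * Z = Z * ((A * B : Γ2) : M2) := by
    rw [Units.val_mul]
    calc X * Y * Z = X * (Y * Z) := by rw [mul_assoc]
    _ = X * (-(Z * Y)) := by rw [show Y * Z = -(Z * Y) from by rw [hCB, neg_neg]]
    _ = -((X * Z) * Y) := by rw [mul_neg, mul_assoc]
    _ = -((-(Z * X)) * Y) := by rw [show X * Z = -(Z * X) from by rw [hCA, neg_neg]]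
    _ = Z * (X * Y) := by rw [neg_mul, neg_neg, mul_assoc]
  obtain ⟨β, hβ⟩ := prop_of_comm (A * B) C hDns hCns (-(lA * lB)) lC hD2 hC2 hDC
  have : (QuotientGroup.mk (A * B) : PGL2) = QuotientGroup.mk C :=
    mk_eq_of_smul (A * B) C β hβ
  rw [QuotientGroup.mk_mul] at this
  exact hrpq this.symm

end Klein8Aux

/-- If a group `G` acts effectively on `ℙ¹(ℂ)`, i.e. embeds into `PGL(2, ℂ)`, then `G`
contains no subgroup isomorphic to `(ℤ/2)³`. -/
theorem stmt_0 (G : Type*) [Group G]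
    (φ : G →* ProjectiveGeneralLinearGroup (Fin 2) ℂ) (hφ : Function.Injective φ) :
    ∀ H : Subgroup G, ¬ Nonempty (H ≃* Multiplicative (Fin 3 → ZMod 2)) := by
  intro H ⟨e⟩
  set E := Multiplicative (Fin 3 → ZMod 2)
  let f : E →* ProjectiveGeneralLinearGroup (Fin 2) ℂ :=
    φ.comp ((H.subtype).comp e.symm.toMonoidHom)
  have hf : Function.Injective f :=
    hφ.comp ((Subtype.val_injective).comp e.symm.injective)
  let g : Fin 3 → E := fun i => Multiplicative.ofAdd (Pi.single i 1)
  have hsq : ∀ x : E, x * x = 1 := by decide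
  have hmul : ∀ i j : Fin 3, f (g i) * f (g j) = f (g i * g j) := fun i j =>
    (map_mul f _ _).symm
  have hone : f 1 = 1 := map_one f
  refine Klein8Aux.pgl2_main (f (g 0)) (f (g 1)) (f (g 2))
    (by rw [hmul, hsq, hone]) (by rw [hmul, hsq, hone]) (by rw [hmul, hsq, hone])
    (fun h => (by decide : g 0 ≠ 1) (hf (by rw [h, hone])))
    (fun h => (by decide : g 1 ≠ 1) (hf (by rw [h, hone])))
    (fun h => (by decide : g 2 ≠ 1) (hf (by rw [h, hone])))
    (fun h => (by decide : g 0 ≠ g 1) (hf h))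
    (fun h => (by decide : g 2 ≠ g 0) (hf h))
    (fun h => (by decide : g 2 ≠ g 1) (hf h))
    (fun h => (by decide : g 2 ≠ g 0 * g 1) (hf (by rw [h, hmul])))
    (by rw [hmul, hmul, mul_comm])
    (by rw [hmul, hmul, mul_comm])
    (by rw [hmul, hmul, mul_comm])
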